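/- arXiv:1709.02832 — 8 statements merged into one kernel-verified Lean document; each statement's English description precedes it below -/
import Mathlib

section
/- For any integer vector y with entries in {0,1}, (∑_i y_i mod 2) ≡ ∑_i y_i − 2·∑_{i<j} y_i y_j + 4·∑_{i<j<k} y_i y_j y_k (mod 8). -/
/-!
If `y` has `m` entries equal to `1`, the sums of `y i * y j` over `i < j` and of
`y i * y j * y k` over `i < j < k` count the two- and three-element subsets of its support,
so they are `m.choose 2` and `m.choose 3`. The claim becomes
`m % 2 ≡ m - 2 * m.choose 2 + 4 * m.choose 3 [ZMOD 8]`, whose right-hand side grows by exactly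
`8 * m.choose 2` when `m` grows by `2`.
-/

open Finset

section

variable {ι R : Type*} [LinearOrder ι] [CommSemiring R]

/-- The `k`-th elementary symmetric function of the `y i`, `i ∈ s`. -/
def esymmLt (y : ι → R) : ℕ → Finset ι → R
  | 0, _ => 1
  | k + 1, s => ∑ j ∈ s, esymmLt y k {i ∈ s | i < j} * y j

variable (y : ι → R)

theorem esymmLt_one (s : Finset ι) : esymmLt y 1 s = ∑ i ∈ s, y i := by
  simp [esymmLt]

theorem esymmLt_two (s : Finset ι) :
    esymmLt y 2 s = ∑ p ∈ s ×ˢ s with p.1 < p.2, y p.1 * y p.2 := by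
  rw [sum_filter, sum_product, sum_comm]
  simp [esymmLt, sum_filter, sum_mul]

theorem esymmLt_three (s : Finset ι) :
    esymmLt y 3 s = ∑ t ∈ s ×ˢ s ×ˢ s with t.1 < t.2.1 ∧ t.2.1 < t.2.2,
      y t.1 * y t.2.1 * y t.2.2 := by
  simp only [sum_filter, sum_product]
  conv_rhs => rw [sum_comm, sum_congr rfl fun j _ => sum_comm, sum_comm]
  refine sum_congr rfl fun k _ => ?_
  simp only [esymmLt, sum_filter, sum_mul, one_mul]
  refine sum_congr rfl fun j _ => ?_
  split_ifs with hjk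
  · rw [sum_mul]
    refine sum_congr rfl fun i _ => ?_
    by_cases hij : i < j
    · simp [hij, hjk, hij.trans hjk]
    · simp [hij]
  · simp [hjk]

theorem esymmLt_insert_of_forall_lt {a : ι} {s : Finset ι} (k : ℕ) (ha : ∀ i ∈ s, i < a) :
    esymmLt y (k + 1) (insert a s) = esymmLt y (k + 1) s + esymmLt y k s * y a := by
  have has : a ∉ s := fun h => lt_irrefl a (ha a h)
  rw [esymmLt, sum_insert has, filter_insert, if_neg (lt_irrefl a),
    filter_true_of_mem ha, add_comm, esymmLt]
  congr 1
  refine sum_congr rfl fun j hj => ?_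
  rw [filter_insert, if_neg (ha j hj).not_gt]

theorem esymmLt_eq_choose_of_zero_one [DecidableEq R] {y : ι → R} {s : Finset ι}
    (hy : ∀ i ∈ s, y i = 0 ∨ y i = 1) (k : ℕ) :
    esymmLt y k s = (#{i ∈ s | y i = 1}).choose k := by
  induction s using Finset.induction_on_max generalizing k with
  | empty => cases k <;> simp [esymmLt]
  | insert a s ha ih =>
    have ih' := ih fun i hi => hy i (mem_insert_of_mem hi)
    cases k with
    | zero => simp [esymmLt]
    | succ k =>
      rw [esymmLt_insert_of_forall_lt y k ha, ih', ih', filter_insert]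
      by_cases h1 : y a = 1
      · have has : a ∉ {i ∈ s | y i = 1} := fun h => lt_irrefl a (ha a (mem_filter.1 h).1)
        rw [if_pos h1, card_insert_of_notMem has, Nat.choose_succ_succ', h1]
        push_cast
        ring
      · have h0 : y a = 0 := (hy a (mem_insert_self a s)).resolve_right h1
        rw [if_neg h1, h0, mul_zero, add_zero]

end

theorem Int.natCast_emod_two_modEq_choose (m : ℕ) :
    (m : ℤ) % 2 ≡ m - 2 * m.choose 2 + 4 * m.choose 3 [ZMOD 8] := by
  induction m using Nat.twoStepInduction with
  | zero => decide
  | one => decide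
  | more m ih _ =>
    have h2 : (m + 2).choose 2 = m.choose 2 + 2 * m + 1 := by
      grind [Nat.choose_succ_succ', Nat.choose_one_right]
    have h3 : (m + 2).choose 3 = m.choose 3 + 2 * m.choose 2 + m := by
      grind [Nat.choose_succ_succ', Nat.choose_one_right]
    have hmod : ((m + 2 : ℕ) : ℤ) % 2 = (m : ℤ) % 2 := by omega
    have hstep : ((m + 2 : ℕ) : ℤ) - 2 * (m + 2).choose 2 + 4 * (m + 2).choose 3 =
        (m - 2 * m.choose 2 + 4 * m.choose 3) + 8 * m.choose 2 := by
      rw [h2, h3]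
      push_cast
      ring
    rw [hmod, hstep]
    exact ih.trans Int.modEq_add_fac_self.symm

theorem sum_mod_two_modeq_eight (n : ℕ) (y : Fin n → ℤ)
    (hy : ∀ i, y i = 0 ∨ y i = 1) :
    (∑ i, y i) % 2 ≡
      (∑ i, y i) -
        2 * (∑ p ∈ Finset.univ.filter (fun p : Fin n × Fin n => p.1 < p.2), y p.1 * y p.2) +
        4 * (∑ t ∈ Finset.univ.filter
              (fun t : Fin n × Fin n × Fin n => t.1 < t.2.1 ∧ t.2.1 < t.2.2),
              y t.1 * y t.2.1 * y t.2.2)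
      [ZMOD 8] := by
  have h2 := esymmLt_two y univ
  have h3 := esymmLt_three y univ
  simp only [univ_product_univ] at h2 h3
  rw [← esymmLt_one, ← h2, ← h3]
  simp only [esymmLt_eq_choose_of_zero_one (fun i _ => hy i), Nat.choose_one_right]
  exact Int.natCast_emod_two_modEq_choose _
end

section
/- The wedge product of Reed-Muller codes satisfies RM(r,m) ∧ RM(r',m) = RM(r+r',m), where the wedge of two codes is the span of entrywise products of their codewords, assuming r + r' ≤ m. -/
/-- The Reed-Muller code `RM(r,m)`: the subspace of `𝔽₂^(2^m)` (functions on `𝔽₂^m`)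
spanned by evaluation vectors of polynomials of total degree at most `r`. -/
def RM (r m : ℕ) : Submodule (ZMod 2) ((Fin m → ZMod 2) → ZMod 2) :=
  Submodule.span (ZMod 2)
    {v | ∃ f : MvPolynomial (Fin m) (ZMod 2),
      f.totalDegree ≤ r ∧ v = fun x => MvPolynomial.eval x f}

/-- The wedge product of two codes: the span of entrywise products of codewords. -/
def codeWedge {ι : Type*} (V W : Submodule (ZMod 2) (ι → ZMod 2)) :
    Submodule (ZMod 2) (ι → ZMod 2) :=
  Submodule.span (ZMod 2) {u | ∃ v ∈ V, ∃ w ∈ W, u = v * w}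

/-!
Evaluation `MvPolynomial (Fin m) 𝔽₂ → (𝔽₂^m → 𝔽₂)` is an algebra homomorphism carrying the
polynomials of total degree `≤ r` onto `RM(r,m)`, and the wedge of two codes is their product as
submodules of the algebra `𝔽₂^(2^m)`. Images of algebra homomorphisms commute with products of
submodules, so it suffices to see that polynomials of total degree `≤ r` times those of total
degree `≤ r'` span those of total degree `≤ r + r'`. Both are spanned by monomials, and every
exponent vector of degree `≤ r + r'` splits as a sum of one of degree `≤ r` and one of degree `≤ r'`.
-/

open MvPolynomial Pointwise

theorem Finsupp.exists_add_eq_of_degree_le_add {σ : Type*} {r r' : ℕ} (c : σ →₀ ℕ)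
    (hc : c.degree ≤ r + r') : ∃ a b : σ →₀ ℕ, a.degree ≤ r ∧ b.degree ≤ r' ∧ a + b = c := by
  obtain ⟨a, hac, ha⟩ := c.exists_le_degree_eq (min r c.degree) (min_le_right _ _)
  have hsplit : a + (c - a) = c := add_tsub_cancel_of_le hac
  refine ⟨a, c - a, ha ▸ min_le_left _ _, ?_, hsplit⟩
  have := congrArg Finsupp.degree hsplit
  rw [map_add, ha] at this
  omega

theorem Finsupp.setOf_degree_le_add_setOf_degree_le (σ : Type*) (r r' : ℕ) :
    {a : σ →₀ ℕ | a.degree ≤ r} + {b | b.degree ≤ r'} = {c | c.degree ≤ r + r'} := by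
  ext c
  simp only [Set.mem_add, Set.mem_ofPred_eq]
  constructor
  · rintro ⟨a, ha, b, hb, rfl⟩
    rw [map_add]
    omega
  · intro hc
    obtain ⟨a, b, ha, hb, hab⟩ := c.exists_add_eq_of_degree_le_add hc
    exact ⟨a, ha, b, hb, hab⟩

theorem MvPolynomial.restrictTotalDegree_mul (σ R : Type*) [CommSemiring R] (r r' : ℕ) :
    restrictTotalDegree σ R r * restrictTotalDegree σ R r' = restrictTotalDegree σ R (r + r') :=
  (restrictSupport_add R _ _).symm.trans <|
    congrArg (restrictSupport R) (Finsupp.setOf_degree_le_add_setOf_degree_le σ r r')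

theorem codeWedge_eq_mul {ι : Type*} (V W : Submodule (ZMod 2) (ι → ZMod 2)) :
    codeWedge V W = V * W := by
  rw [codeWedge, Submodule.mul_eq_span_mul_set]
  congr 1
  ext u
  simp only [Set.mem_ofPred_eq, Set.mem_mul, SetLike.mem_coe, eq_comm]

noncomputable def evalAlgHom (m : ℕ) :
    MvPolynomial (Fin m) (ZMod 2) →ₐ[ZMod 2] (Fin m → ZMod 2) → ZMod 2 :=
  AlgHom.pi fun x => aeval x

theorem RM_eq_map_restrictTotalDegree (r m : ℕ) :
    RM r m = (restrictTotalDegree (Fin m) (ZMod 2) r).map (evalAlgHom m).toLinearMap := by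
  rw [← Submodule.span_eq (restrictTotalDegree _ _ r), Submodule.map_span, RM]
  congr 1
  ext v
  simp [mem_restrictTotalDegree, evalAlgHom, eq_comm, funext_iff]

theorem RM_wedge_general (r r' m : ℕ) :
    codeWedge (RM r m) (RM r' m) = RM (r + r') m := by
  rw [codeWedge_eq_mul, RM_eq_map_restrictTotalDegree, RM_eq_map_restrictTotalDegree,
    RM_eq_map_restrictTotalDegree, ← Submodule.map_mul, restrictTotalDegree_mul]

theorem RM_wedge (r r' m : ℕ) (h : r + r' ≤ m) :
    codeWedge (RM r m) (RM r' m) = RM (r + r') m :=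
  RM_wedge_general r r' m
end

section
/- The dual of the Reed-Muller code RM(r,m) is RM(m−r−1,m), for 0 ≤ r ≤ m−1. -/
open MvPolynomial Finset

lemma totalDegree_prod_le_card {σ ι R : Type*} [CommSemiring R] (s : Finset ι)
    (p : ι → MvPolynomial σ R) (hp : ∀ i ∈ s, (p i).totalDegree ≤ 1) :
    (∏ i ∈ s, p i).totalDegree ≤ #s :=
  (totalDegree_finsetProd s p).trans <| (sum_le_sum hp).trans_eq <| by simp

lemma totalDegree_X_add_one_le {σ R : Type*} [CommSemiring R] [Nontrivial R] (i : σ) :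
    (X i + 1 : MvPolynomial σ R).totalDegree ≤ 1 :=
  (totalDegree_add _ _).trans <| max_le (totalDegree_X i).le (by simp)

section AlgebraicNormalForm

variable {σ : Type*} [Fintype σ]

lemma prod_add_add_one_eq_ite (x y : σ → ZMod 2) :
    ∏ i, (x i + y i + 1) = if x = y then 1 else 0 := by
  have h𝔽₂ : ∀ a b : ZMod 2, a + b + 1 = if a = b then 1 else 0 := by decide
  simp only [h𝔽₂, prod_boole, mem_univ, true_implies, funext_iff]

variable [DecidableEq σ]

/-- The coefficient of `∏_{i ∈ S} X_i` in the algebraic normal form of `v`. -/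
def anfCoeff (v : (σ → ZMod 2) → ZMod 2) (S : Finset σ) : ZMod 2 :=
  ∑ x, v x * ∏ i ∈ Sᶜ, (x i + 1)

/-- The algebraic normal form: the multilinear polynomial whose evaluation is `v`. -/
noncomputable def anf (v : (σ → ZMod 2) → ZMod 2) : MvPolynomial σ (ZMod 2) :=
  ∑ S, C (anfCoeff v S) * ∏ i ∈ S, X i

lemma eval_anf (v : (σ → ZMod 2) → ZMod 2) (y : σ → ZMod 2) : eval y (anf v) = v y := by
  have expand : ∀ x : σ → ZMod 2,
      ∑ S : Finset σ, (∏ i ∈ Sᶜ, (x i + 1)) * ∏ i ∈ S, y i =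
        if x = y then 1 else 0 := by
    intro x
    rw [← prod_add_add_one_eq_ite, ← powerset_univ]
    simp only [compl_eq_univ_sdiff, ← prod_add, mul_comm]
    exact prod_congr rfl fun i _ => by ring
  calc eval y (anf v)
      = ∑ S : Finset σ, ∑ x, v x * ((∏ i ∈ Sᶜ, (x i + 1)) * ∏ i ∈ S, y i) := by
        simp only [anf, anfCoeff, map_sum, map_mul, eval_C, eval_prod, eval_X, sum_mul,
          mul_assoc]
    _ = ∑ x, v x * if x = y then 1 else 0 := by
        simp only [sum_comm (γ := Finset σ), ← mul_sum, expand]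
    _ = v y := by simp

lemma totalDegree_anf_le (v : (σ → ZMod 2) → ZMod 2) {d : ℕ}
    (hv : ∀ S : Finset σ, d < #S → anfCoeff v S = 0) : (anf v).totalDegree ≤ d := by
  refine totalDegree_finsetSum_le fun S _ => ?_
  by_cases hS : d < #S
  · simp [hv S hS]
  · refine (totalDegree_mul _ _).trans ?_
    rw [totalDegree_C, zero_add]
    exact (totalDegree_prod_le_card S _ fun i _ => (totalDegree_X i).le).trans (by omega)

end AlgebraicNormalForm

lemma RM_eq_map (r m : ℕ) :
    RM r m = (restrictTotalDegree (Fin m) (ZMod 2) r).map (evalₗ (ZMod 2) (Fin m)) := by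
  rw [RM, ← Submodule.span_eq (Submodule.map _ _)]
  congr 1
  ext v
  simp [mem_restrictTotalDegree, eq_comm, funext_iff]

lemma mem_RM_iff {r m : ℕ} {v : (Fin m → ZMod 2) → ZMod 2} :
    v ∈ RM r m ↔
      ∃ f : MvPolynomial (Fin m) (ZMod 2), f.totalDegree ≤ r ∧ v = fun x => eval x f := by
  simp [RM_eq_map, mem_restrictTotalDegree, eq_comm, funext_iff]

lemma sum_mul_eq_zero_of_mem_RM {a b m : ℕ} {u v : (Fin m → ZMod 2) → ZMod 2}
    (hu : u ∈ RM a m) (hv : v ∈ RM b m) (hab : a + b < m) : ∑ x, u x * v x = 0 := by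
  obtain ⟨f, hf, rfl⟩ := mem_RM_iff.1 hu
  obtain ⟨g, hg, rfl⟩ := mem_RM_iff.1 hv
  simp only [← map_mul]
  refine sum_eval_eq_zero (f * g) ?_
  simp only [ZMod.card, Fintype.card_fin]
  exact (totalDegree_mul f g).trans_lt (by omega)

lemma mem_RM_of_orthogonal {r m : ℕ} {v : (Fin m → ZMod 2) → ZMod 2}
    (hv : ∀ u ∈ RM r m, ∑ x, v x * u x = 0) : v ∈ RM (m - r - 1) m := by
  refine Submodule.subset_span
    ⟨anf v, totalDegree_anf_le v fun S hS => ?_, funext fun y => (eval_anf v y).symm⟩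
  have hdeg : (∏ i ∈ Sᶜ, (X i + 1) : MvPolynomial (Fin m) (ZMod 2)).totalDegree ≤ r := by
    refine (totalDegree_prod_le_card _ _ fun i _ => totalDegree_X_add_one_le i).trans ?_
    rw [card_compl, Fintype.card_fin]
    omega
  simpa [anfCoeff] using hv _ (Submodule.subset_span ⟨_, hdeg, rfl⟩)

/-- The dual of `RM(r,m)` is `RM(m-r-1,m)` for `0 ≤ r ≤ m-1`. -/
theorem RM_dual (r m : ℕ) (h : r + 1 ≤ m) :
    {v : (Fin m → ZMod 2) → ZMod 2 | ∀ u ∈ RM r m, ∑ x, v x * u x = 0} =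
      ↑(RM (m - r - 1) m) := by
  ext v
  exact ⟨mem_RM_of_orthogonal, fun hv u hu => sum_mul_eq_zero_of_mem_RM hv hu (by omega)⟩
end

section
/- The minimum distance of the Reed-Muller code RM(r,m) is 2^{m−r}, for 0 ≤ r ≤ m. -/
/-!
Since `a ^ k = a` in `𝔽₂` for `k ≠ 0`, every codeword of `RM(r,m)` is a multilinear polynomial
`∑_T c_T x^T` with `c_T = 0` for `|T| > r`. Take `S` maximal with `c_S ≠ 0`. Fixing the variables
outside `S` to arbitrary values leaves a multilinear polynomial in the variables of `S` whose
coefficient at `x^S` is still `c_S`, and a nonzero multilinear polynomial does not vanish on all of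
`𝔽₂^S`. So each of the `2^(m-|S|)` translates of the coordinate subspace `𝔽₂^S` contains a point
where the codeword is `1`. The monomial `x_1 ⋯ x_r` has weight exactly `2^(m-r)`.
-/

open Finset

section Multilinear

variable {σ R : Type*} [Fintype σ] [CommSemiring R]

def multilinearEval (c : Finset σ → R) (x : σ → R) : R :=
  ∑ T, c T * ∏ i ∈ T, x i

@[simp]
theorem multilinearEval_zero : multilinearEval (0 : Finset σ → R) = 0 := by
  funext x
  simp [multilinearEval]

variable [DecidableEq σ]

/-- Evaluating at the indicator vector of `S` gives `∑_{T ⊆ S} c T`, so the coefficients are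
recovered by strong induction on `S`. -/
theorem eq_zero_of_multilinearEval_eq_zero {c : Finset σ → R}
    (h : ∀ x, multilinearEval c x = 0) : c = 0 := by
  funext S
  induction S using Finset.strongInduction with
  | H S ih =>
    have hS := h fun i => if i ∈ S then 1 else 0
    simp only [multilinearEval, prod_boole, mul_ite, mul_one, mul_zero, ← subset_iff,
      ← sum_filter] at hS
    rwa [filter_subset_univ, sum_eq_single_of_mem S (mem_powerset_self S)
      fun T hT hTS => ih T (ssubset_of_subset_of_ne (mem_powerset.1 hT) hTS)] at hS

/-- The coefficients, as a polynomial in the variables of `S`, of the multilinear polynomial with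
coefficients `c` after the variables outside `S` are set to `z`. -/
def restrictCoeffs (c : Finset σ → R) (S : Finset σ) (z : σ → R) (U : Finset σ) : R :=
  ∑ T with T ∩ S = U, c T * ∏ i ∈ T \ S, z i

theorem multilinearEval_piecewise (c : Finset σ → R) (S : Finset σ) (x z : σ → R) :
    multilinearEval c (S.piecewise x z) = multilinearEval (restrictCoeffs c S z) x := by
  simp only [multilinearEval, restrictCoeffs, sum_mul]
  rw [← sum_fiberwise univ (· ∩ S)]
  refine sum_congr rfl fun U _ => sum_congr rfl fun T hT => ?_
  rw [← (mem_filter.1 hT).2, ← prod_inter_mul_prod_sdiff T S,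
    prod_congr rfl fun i hi => S.piecewise_eq_of_mem x z (mem_inter.1 hi).2,
    prod_congr rfl fun i hi => S.piecewise_eq_of_notMem x z (mem_sdiff.1 hi).2]
  ring

theorem restrictCoeffs_self {c : Finset σ → R} {S : Finset σ} (hS : Maximal (c · ≠ 0) S)
    (z : σ → R) : restrictCoeffs c S z S = c S := by
  rw [restrictCoeffs, sum_eq_single_of_mem S (by simp)]
  · simp
  · intro T hT hTS
    have hST : S ⊂ T := ssubset_of_subset_of_ne (inter_eq_right.1 (mem_filter.1 hT).2) hTS.symm
    rw [not_not.1 fun hT => hS.not_gt hT hST, zero_mul]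

theorem exists_multilinearEval_piecewise_ne_zero {c : Finset σ → R} {S : Finset σ}
    (hS : Maximal (c · ≠ 0) S) (z : σ → R) : ∃ x, multilinearEval c (S.piecewise x z) ≠ 0 := by
  by_contra! h
  simp only [multilinearEval_piecewise] at h
  exact hS.prop (restrictCoeffs_self hS z ▸ congrFun (eq_zero_of_multilinearEval_eq_zero h) S)

end Multilinear

section BooleanCube

variable {σ : Type*} [Fintype σ] [DecidableEq σ]

theorem pow_card_compl_le_card_filter {α : Type*} [Fintype α] [Nonempty α] (S : Finset σ)
    (P : (σ → α) → Prop) [DecidablePred P] (hP : ∀ z, ∃ x, P (S.piecewise x z)) :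
    Fintype.card α ^ (Fintype.card σ - #S) ≤ #{x | P x} := by
  let extend (w : (Sᶜ : Finset σ) → α) : σ → α := fun i =>
    if h : i ∈ Sᶜ then w ⟨i, h⟩ else Classical.arbitrary α
  choose x hx using fun w => hP (extend w)
  have hinj : Function.Injective fun w => S.piecewise (x w) (extend w) := by
    intro w w' hww'
    funext ⟨i, hi⟩
    simpa [extend, mem_compl.1 hi] using congrFun hww' i
  calc Fintype.card α ^ (Fintype.card σ - #S) = #(univ : Finset ((Sᶜ : Finset σ) → α)) := by
        simp
    _ ≤ #{x | P x} := card_le_card_of_injOn _ (fun w _ => by simpa using hx w) hinj.injOn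

theorem card_filter_prod_eq_one (S : Finset σ) :
    #{x : σ → ZMod 2 | ∏ i ∈ S, x i = 1} = 2 ^ (Fintype.card σ - #S) := by
  have hfilter : ({x : σ → ZMod 2 | ∏ i ∈ S, x i = 1} : Finset _) =
      Fintype.piFinset fun i => if i ∈ S then {1} else univ := by
    ext x
    simp only [mem_filter, mem_univ, true_and, Fintype.mem_piFinset, prod_eq_one_iff]
    exact forall_congr' fun i => by split_ifs <;> simp [*]
  rw [hfilter, Fintype.card_piFinset]
  simp only [apply_ite card, card_singleton, card_univ, ZMod.card, prod_ite, prod_const_one,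
    one_mul, prod_const, ← card_compl]
  congr 2
  ext
  simp

open MvPolynomial in
theorem exists_multilinearEval_eq_eval (f : MvPolynomial σ (ZMod 2)) :
    ∃ c : Finset σ → ZMod 2, (∀ S, c S ≠ 0 → #S ≤ f.totalDegree) ∧
      (fun x => eval x f) = multilinearEval c := by
  refine ⟨fun S => ∑ d ∈ f.support with d.support = S, f.coeff d, fun S hS => ?_, ?_⟩
  · obtain ⟨d, hd⟩ := nonempty_of_sum_ne_zero hS
    rw [mem_filter] at hd
    calc #S = ∑ i ∈ d.support, 1 := by rw [← hd.2, card_eq_sum_ones]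
      _ ≤ d.sum fun _ e => e :=
        sum_le_sum fun i hi => Nat.one_le_iff_ne_zero.2 (Finsupp.mem_support_iff.1 hi)
      _ ≤ f.totalDegree := le_totalDegree hd.1
  · funext x
    rw [eval_eq, multilinearEval, ← sum_fiberwise f.support (·.support)]
    refine sum_congr rfl fun S _ => ?_
    rw [sum_mul]
    refine sum_congr rfl fun d hd => ?_
    rw [← (mem_filter.1 hd).2]
    exact congrArg _ <| prod_congr rfl fun i hi =>
      IsIdempotentElem.pow_eq ((by decide : ∀ a : ZMod 2, a * a = a) _)
        (Finsupp.mem_support_iff.1 hi)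

theorem pow_le_card_multilinearEval_eq_one {c : Finset σ → ZMod 2}
    (hc : multilinearEval c ≠ 0) {r : ℕ} (hr : ∀ S, c S ≠ 0 → #S ≤ r) :
    2 ^ (Fintype.card σ - r) ≤ #{x | multilinearEval c x = 1} := by
  have hc0 : c ≠ 0 := by
    rintro rfl
    exact hc multilinearEval_zero
  obtain ⟨S, hS⟩ := Set.Finite.exists_maximal (Set.toFinite {S | c S ≠ 0}) (Function.ne_iff.1 hc0)
  have hfibre (z : σ → ZMod 2) : ∃ x, multilinearEval c (S.piecewise x z) = 1 := by
    obtain ⟨x, hx⟩ := exists_multilinearEval_piecewise_ne_zero hS z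
    exact ⟨x, (by decide : ∀ a : ZMod 2, a ≠ 0 → a = 1) _ hx⟩
  calc 2 ^ (Fintype.card σ - r) ≤ 2 ^ (Fintype.card σ - #S) :=
        Nat.pow_le_pow_right two_pos (Nat.sub_le_sub_left (hr S hS.prop) _)
    _ ≤ #{x | multilinearEval c x = 1} := by
        simpa using pow_card_compl_le_card_filter S (multilinearEval c · = 1) hfibre

end BooleanCube

theorem exists_multilinearEval_of_mem_RM {r m : ℕ} {v : (Fin m → ZMod 2) → ZMod 2}
    (hv : v ∈ RM r m) :
    ∃ c : Finset (Fin m) → ZMod 2, (∀ S, c S ≠ 0 → #S ≤ r) ∧ v = multilinearEval c := by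
  induction hv using Submodule.span_induction with
  | mem v hv =>
    obtain ⟨f, hf, rfl⟩ := hv
    obtain ⟨c, hc, hfc⟩ := exists_multilinearEval_eq_eval f
    exact ⟨c, fun S hS => (hc S hS).trans hf, hfc⟩
  | zero => exact ⟨0, fun S hS => absurd rfl hS, multilinearEval_zero.symm⟩
  | add v w _ _ hv hw =>
    obtain ⟨c, hc, rfl⟩ := hv
    obtain ⟨c', hc', rfl⟩ := hw
    refine ⟨c + c', fun S hS => ?_, by funext x; simp [multilinearEval, add_mul, sum_add_distrib]⟩
    by_cases hcS : c S = 0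
    · exact hc' S (by simpa [hcS] using hS)
    · exact hc S hcS
  | smul a v _ hv =>
    obtain ⟨c, hc, rfl⟩ := hv
    exact ⟨a • c, fun S hS => hc S fun h => hS (by simp [h]),
      by funext x; simp [multilinearEval, mul_sum, mul_assoc]⟩

theorem prod_mem_RM {r m : ℕ} {S : Finset (Fin m)} (hS : #S ≤ r) :
    (fun x => ∏ i ∈ S, x i) ∈ RM r m := by
  refine Submodule.subset_span ⟨∏ i ∈ S, MvPolynomial.X i, ?_, by simp⟩
  refine (MvPolynomial.totalDegree_finsetProd _ _).trans ?_
  simpa [MvPolynomial.totalDegree_X] using hS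

/-- The minimum distance of `RM(r,m)` is `2^(m-r)` for `0 ≤ r ≤ m`: there is a nonzero
codeword of weight `2^(m-r)`, and every nonzero codeword has weight at least `2^(m-r)`. -/
theorem RM_min_distance (r m : ℕ) (h : r ≤ m) :
    (∃ v ∈ RM r m, v ≠ 0 ∧
        (Finset.univ.filter (fun x : Fin m → ZMod 2 => v x = 1)).card = 2 ^ (m - r)) ∧
    (∀ v ∈ RM r m, v ≠ 0 →
        2 ^ (m - r) ≤ (Finset.univ.filter (fun x : Fin m → ZMod 2 => v x = 1)).card) := by
  constructor
  · obtain ⟨S, -, hS⟩ := exists_subset_card_eq (s := (univ : Finset (Fin m))) (by simpa using h)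
    refine ⟨_, prod_mem_RM hS.le, fun h0 => by simpa using congrFun h0 1, ?_⟩
    rw [card_filter_prod_eq_one, hS, Fintype.card_fin]
  · intro v hv hv0
    obtain ⟨c, hc, rfl⟩ := exists_multilinearEval_of_mem_RM hv
    simpa using pow_le_card_multilinearEval_eq_one hv0 hc
end

section
/- The dimension of RM(r,m) over 𝔽₂ equals ∑_{j=0}^{r} binom(m,j). -/
/-!
Over `𝔽₂` we have `x ^ k = x` for `k ≥ 1`, so every polynomial function is a combination of the
squarefree monomials `x ↦ ∏ i ∈ S, x i`, and a polynomial of total degree `≤ r` only involves those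
with `#S ≤ r`. These monomial functions are linearly independent: evaluating a vanishing
combination at the indicator vector of `S` gives `∑ T ⊆ S, c T = 0`, so `c S = 0` by induction
on `S`. Hence they form a basis of `RM(r,m)`, and there are `∑ j ≤ r, C(m,j)` of them.
-/

open Finset MvPolynomial

namespace Finset

theorem card_filter_card_le (α : Type*) [Fintype α] (r : ℕ) :
    #{s : Finset α | #s ≤ r} = ∑ j ∈ range (r + 1), (Fintype.card α).choose j := by
  rw [card_eq_sum_card_fiberwise (f := card) (t := range (r + 1))
    fun s hs => by simpa [Nat.lt_succ_iff] using hs]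
  refine sum_congr rfl fun j hj => ?_
  rw [← card_univ, ← card_powersetCard]
  congr 1
  ext s
  simp only [mem_filter, mem_univ, true_and, mem_powersetCard_univ]
  constructor
  · exact And.right
  · rintro rfl
    exact ⟨Nat.lt_succ_iff.mp (mem_range.mp hj), rfl⟩

end Finset

section MonomialFun

variable {σ R : Type*}

variable (R) in
def monomialFun [CommSemiring R] (S : Finset σ) : (σ → R) → R :=
  fun x => ∏ i ∈ S, x i

theorem monomialFun_indicator [CommSemiring R] [DecidableEq σ] (S T : Finset σ) :
    monomialFun R S (fun i => if i ∈ T then 1 else 0) = if S ⊆ T then 1 else 0 := by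
  unfold monomialFun
  split_ifs with h
  · exact prod_eq_one fun i hi => by simp [h hi]
  · obtain ⟨i, hiS, hiT⟩ := not_subset.mp h
    exact prod_eq_zero hiS (by simp [hiT])

theorem linearIndependent_monomialFun [Fintype σ] [CommRing R] :
    LinearIndependent R (monomialFun R : Finset σ → (σ → R) → R) := by
  classical
  rw [Fintype.linearIndependent_iff]
  intro c hc S
  induction S using strongInductionOn with
  | _ S ih =>
    have hS : ∑ T with T ⊆ S, c T = 0 := by
      simpa [Finset.sum_apply, monomialFun_indicator, sum_ite] using
        congrFun hc (fun i => if i ∈ S then 1 else 0)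
    rwa [sum_eq_single_of_mem S (by simp) fun T hT hne =>
      ih T (Finset.ssubset_iff_subset_ne.mpr ⟨(mem_filter.mp hT).2, hne⟩)] at hS

theorem eval_eq_sum_coeff_mul_monomialFun [CommSemiring R] (hR : ∀ a : R, IsIdempotentElem a)
    (f : MvPolynomial σ R) (x : σ → R) :
    eval x f = ∑ d ∈ f.support, coeff d f * monomialFun R d.support x := by
  rw [eval_eq]
  refine sum_congr rfl fun d _ => congrArg _ (prod_congr rfl fun i hi => ?_)
  exact (hR (x i)).pow_eq (Finsupp.mem_support_iff.mp hi)

end MonomialFun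

theorem MvPolynomial.card_support_le_totalDegree {σ R : Type*} [CommSemiring R]
    {f : MvPolynomial σ R} {d : σ →₀ ℕ} (hd : d ∈ f.support) :
    #d.support ≤ f.totalDegree := by
  calc #d.support = ∑ _i ∈ d.support, 1 := card_eq_sum_ones _
    _ ≤ d.sum fun _ e => e :=
        sum_le_sum fun i hi => Nat.one_le_iff_ne_zero.mpr (Finsupp.mem_support_iff.mp hi)
    _ ≤ f.totalDegree := le_totalDegree hd

theorem ZMod.two_isIdempotentElem (a : ZMod 2) : IsIdempotentElem a := by
  fin_cases a <;> rfl

theorem monomialFun_mem_RM {r m : ℕ} {S : Finset (Fin m)} (hS : #S ≤ r) :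
    monomialFun (ZMod 2) S ∈ RM r m := by
  refine Submodule.subset_span ⟨∏ i ∈ S, X i, ?_, funext fun x => by simp [monomialFun]⟩
  calc (∏ i ∈ S, X i : MvPolynomial (Fin m) (ZMod 2)).totalDegree
      ≤ ∑ i ∈ S, (X i : MvPolynomial (Fin m) (ZMod 2)).totalDegree := totalDegree_finsetProd _ _
    _ = #S := by simp [totalDegree_X]
    _ ≤ r := hS

theorem RM_eq_span_monomialFun (r m : ℕ) :
    RM r m = Submodule.span (ZMod 2)
      (Set.range fun S : {S : Finset (Fin m) // #S ≤ r} => monomialFun (ZMod 2) S.1) := by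
  refine le_antisymm (Submodule.span_le.mpr ?_)
    (Submodule.span_le.mpr <| Set.range_subset_iff.mpr fun S => monomialFun_mem_RM S.2)
  rintro v ⟨f, hf, rfl⟩
  have hv : (fun x => eval x f) = ∑ d ∈ f.support, coeff d f • monomialFun (ZMod 2) d.support :=
    funext fun x => by
      simpa using eval_eq_sum_coeff_mul_monomialFun ZMod.two_isIdempotentElem f x
  rw [hv]
  exact Submodule.sum_mem _ fun d hd => Submodule.smul_mem _ _ <| Submodule.subset_span
    ⟨⟨d.support, (card_support_le_totalDegree hd).trans hf⟩, rfl⟩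

/-- The dimension of `RM(r,m)` over `𝔽₂` is `∑_{j=0}^{r} C(m,j)`. -/
theorem RM_finrank (r m : ℕ) :
    Module.finrank (ZMod 2) (RM r m) = ∑ j ∈ Finset.range (r + 1), Nat.choose m j := by
  have hli : LinearIndependent (ZMod 2)
      (fun S : {S : Finset (Fin m) // #S ≤ r} => monomialFun (ZMod 2) S.1) :=
    linearIndependent_monomialFun.comp Subtype.val Subtype.val_injective
  rw [RM_eq_span_monomialFun, finrank_span_eq_card hli, Fintype.card_subtype,
    card_filter_card_le, Fintype.card_fin]
end

section
/- Let m be a multiple of 3. For u ∈ 𝔽₂^{m/3} \ {0, 1⃗}, define indicator vectors a^(u) = (u, ū, 0), b^(u) = (0, u, ū), c^(u) = (ū, 0, u) of length m, where ū is the bitwise complement of u. Then for any x = a^(u), y = b^(v), z = c^(w), x ∨ y ∨ z = 1⃗ (the all-ones vector of length m) if and only if x, y, z come from the same triple, i.e. u = v = w; moreover a^(u) ∨ b^(u) ∨ c^(u) = 1⃗ for every u. -/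
/-- `a^(u) = (u, ū, 0)`, a vector of length `m = 3s` written on index set `Fin 3 × Fin s`. -/
def aT {s : ℕ} (u : Fin s → Bool) : Fin 3 × Fin s → Bool :=
  fun p => if p.1 = 0 then u p.2 else if p.1 = 1 then !u p.2 else false

/-- `b^(u) = (0, u, ū)`. -/
def bT {s : ℕ} (u : Fin s → Bool) : Fin 3 × Fin s → Bool :=
  fun p => if p.1 = 0 then false else if p.1 = 1 then u p.2 else !u p.2

/-- `c^(u) = (ū, 0, u)`. -/
def cT {s : ℕ} (u : Fin s → Bool) : Fin 3 × Fin s → Bool :=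
  fun p => if p.1 = 0 then !u p.2 else if p.1 = 1 then false else u p.2

lemma same_triple {s : ℕ} (u : Fin s → Bool) :
    (fun p => aT u p || bT u p || cT u p) = fun _ => true := by
  funext p
  rcases p with ⟨j, i⟩
  fin_cases j <;> simp [aT, bT, cT]

/-- For every `u`, `a^(u) ∨ b^(u) ∨ c^(u) = 1⃗`; and for `u, v, w ∉ {0, 1⃗}`,
`a^(u) ∨ b^(v) ∨ c^(w) = 1⃗` if and only if `u = v = w`. -/
theorem triple_or_all_ones (s : ℕ) (hs : 0 < s) :
    (∀ u : Fin s → Bool, (fun p => aT u p || bT u p || cT u p) = fun _ => true) ∧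
    (∀ u v w : Fin s → Bool,
      u ≠ (fun _ => false) → u ≠ (fun _ => true) →
      v ≠ (fun _ => false) → v ≠ (fun _ => true) →
      w ≠ (fun _ => false) → w ≠ (fun _ => true) →
      (((fun p => aT u p || bT v p || cT w p) = fun _ => true) ↔ (u = v ∧ v = w))) := by
  refine ⟨same_triple, ?_⟩
  intro u v w _ _ _ _ _ _
  constructor
  · intro h
    have key : ∀ i, u i = v i ∧ v i = w i := by
      intro i
      have e0 := congrFun h (0, i)
      have e1 := congrFun h (1, i)
      have e2 := congrFun h (2, i)
      simp [aT, bT, cT] at e0 e1 e2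
      revert e0 e1 e2
      cases u i <;> cases v i <;> cases w i <;> simp
    exact ⟨funext fun i => (key i).1, funext fun i => (key i).2⟩
  · rintro ⟨rfl, rfl⟩
    exact same_triple u
end

section
/- Let G be a triorthogonal matrix with k_T odd-weight rows G_T and k_0 even-weight rows G_0. Then the padded matrix G̃ = [[I, G_T],[0, G_0]] (with I a k_T×k_T identity block) is a triorthogonal matrix all of whose rows have even weight, and its row span is a triorthogonal subspace. -/
/-!
The identity columns of distinct padded rows have disjoint supports, so pairwise and triple
overlaps are those of `G`, while each odd-weight row gains one unit of weight. Over `𝔽₂` we have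
`x * x = x`, so the triple form `∑ⱼ u j * v j * w j` on rows with repetitions reduces to weights
and pairwise overlaps, hence vanishes on all triples of rows; being trilinear, it then vanishes
on the whole row span.
-/

/-- Rows of the original triorthogonal matrix `G = [G_T; G_0]`. -/
def origRow {kT k0 n : ℕ} (GT : Matrix (Fin kT) (Fin n) (ZMod 2))
    (G0 : Matrix (Fin k0) (Fin n) (ZMod 2)) : Fin kT ⊕ Fin k0 → Fin n → ZMod 2
  | Sum.inl a => GT a
  | Sum.inr a => G0 a

/-- Rows of the padded matrix `G̃ = [[I, G_T],[0, G_0]]`. -/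
def paddedRow {kT k0 n : ℕ} (GT : Matrix (Fin kT) (Fin n) (ZMod 2))
    (G0 : Matrix (Fin k0) (Fin n) (ZMod 2)) :
    Fin kT ⊕ Fin k0 → (Fin kT ⊕ Fin n) → ZMod 2
  | Sum.inl a, Sum.inl b => if a = b then 1 else 0
  | Sum.inl a, Sum.inr j => GT a j
  | Sum.inr _, Sum.inl _ => 0
  | Sum.inr a, Sum.inr j => G0 a j

open Submodule Pointwise

theorem ZMod.mul_self_eq_self (x : ZMod 2) : x * x = x := by
  fin_cases x <;> rfl

theorem even_card_filter_eq_one_iff_sum_eq_zero {ι : Type*} [Fintype ι] (f : ι → ZMod 2) :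
    Even (Finset.univ.filter (fun j => f j = 1)).card ↔ ∑ j, f j = 0 := by
  have hsum : ∑ j, f j = ∑ j, if f j = 1 then (1 : ZMod 2) else 0 :=
    Finset.sum_congr rfl fun j _ => by generalize f j = x; fin_cases x <;> rfl
  rw [hsum, Finset.sum_boole, ZMod.natCast_eq_zero_iff_even]

theorem sum_mul_mul_eq_zero_of_mem_span {R ι m : Type*} [CommSemiring R] [Fintype m]
    {g : ι → m → R} (h : ∀ a b c, ∑ j, g a j * g b j * g c j = 0) {u v w : m → R}
    (hu : u ∈ span R (Set.range g)) (hv : v ∈ span R (Set.range g))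
    (hw : w ∈ span R (Set.range g)) :
    ∑ j, u j * v j * w j = 0 := by
  classical
  have huvw : u * v * w ∈ span R (Set.range g * Set.range g * Set.range g) := by
    rw [← span_mul_span, ← span_mul_span]
    exact mul_mem_mul (mul_mem_mul hu hv) hw
  have hker : span R (Set.range g * Set.range g * Set.range g) ≤
      LinearMap.ker (LinearMap.lsum R (fun _ : m => R) R fun _ => LinearMap.id) := by
    rw [span_le]
    rintro _ ⟨_, ⟨_, ⟨a, rfl⟩, _, ⟨b, rfl⟩, rfl⟩, _, ⟨c, rfl⟩, rfl⟩
    simpa using h a b c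
  simpa using hker huvw

theorem sum_mul_mul_eq_zero_of_triorthogonal {ι m : Type*} [Fintype m] (g : ι → m → ZMod 2)
    (hrow : ∀ a, ∑ j, g a j = 0)
    (hpair : ∀ a b, a ≠ b → ∑ j, g a j * g b j = 0)
    (htriple : ∀ a b c, a ≠ b → a ≠ c → b ≠ c → ∑ j, g a j * g b j * g c j = 0)
    (a b c : ι) : ∑ j, g a j * g b j * g c j = 0 := by
  have hdup (x y : ZMod 2) : x * y * x = x * y ∧ x * y * y = x * y := by
    fin_cases x <;> fin_cases y <;> decide
  by_cases hab : a = b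
  · subst hab
    simp only [ZMod.mul_self_eq_self]
    by_cases hac : a = c
    · subst hac
      simpa only [ZMod.mul_self_eq_self] using hrow a
    · exact hpair a c hac
  by_cases hac : a = c
  · subst hac
    simpa only [(hdup _ _).1] using hpair a b hab
  by_cases hbc : b = c
  · subst hbc
    simpa only [(hdup _ _).2] using hpair a b hab
  exact htriple a b c hab hac hbc

section Padding

variable {kT k0 n : ℕ} {GT : Matrix (Fin kT) (Fin n) (ZMod 2)}
  {G0 : Matrix (Fin k0) (Fin n) (ZMod 2)}

theorem paddedRow_inl (a : Fin kT ⊕ Fin k0) (b : Fin kT) :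
    paddedRow GT G0 a (Sum.inl b) = if a = Sum.inl b then 1 else 0 := by
  rcases a with a | a <;> simp [paddedRow]

theorem paddedRow_inr (a : Fin kT ⊕ Fin k0) (j : Fin n) :
    paddedRow GT G0 a (Sum.inr j) = origRow GT G0 a j := by
  rcases a with a | a <;> rfl

theorem sum_paddedRow_mul_paddedRow_mul {a b : Fin kT ⊕ Fin k0} (hab : a ≠ b)
    (x : Fin kT ⊕ Fin n → ZMod 2) :
    ∑ j, paddedRow GT G0 a j * paddedRow GT G0 b j * x j =
      ∑ j, origRow GT G0 a j * origRow GT G0 b j * x (Sum.inr j) := by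
  have hI : ∑ c, paddedRow GT G0 a (Sum.inl c) * paddedRow GT G0 b (Sum.inl c) *
      x (Sum.inl c) = 0 := by
    refine Finset.sum_eq_zero fun c _ => ?_
    by_cases ha : a = Sum.inl c
    · simp [paddedRow_inl, ha, (ha ▸ hab).symm]
    · simp [paddedRow_inl, ha]
  simp only [Fintype.sum_sum_type, hI, paddedRow_inr, zero_add]

theorem sum_paddedRow_eq_zero (hodd : ∀ a : Fin kT, ∑ j, GT a j = 1)
    (heven : ∀ a : Fin k0, ∑ j, G0 a j = 0) (a : Fin kT ⊕ Fin k0) :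
    ∑ j, paddedRow GT G0 a j = 0 := by
  rcases a with a | a
  · simp only [paddedRow, Fintype.sum_sum_type, Finset.sum_ite_eq, Finset.mem_univ, ↓reduceIte,
      hodd]
    decide
  · simp [Fintype.sum_sum_type, paddedRow, heven]

end Padding

/-- Padding a triorthogonal matrix with an identity block next to its odd-weight rows
yields a triorthogonal matrix all of whose rows have even weight, whose row span is a
triorthogonal subspace. -/
theorem padded_triorthogonal {kT k0 n : ℕ}
    (GT : Matrix (Fin kT) (Fin n) (ZMod 2)) (G0 : Matrix (Fin k0) (Fin n) (ZMod 2))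
    (hpair : ∀ a b : Fin kT ⊕ Fin k0, a ≠ b →
      ∑ j, origRow GT G0 a j * origRow GT G0 b j = 0)
    (htriple : ∀ a b c : Fin kT ⊕ Fin k0, a ≠ b → a ≠ c → b ≠ c →
      ∑ j, origRow GT G0 a j * origRow GT G0 b j * origRow GT G0 c j = 0)
    (hodd : ∀ a : Fin kT, ∑ j, GT a j = 1)
    (heven : ∀ a : Fin k0, ∑ j, G0 a j = 0) :
    (∀ a b : Fin kT ⊕ Fin k0, a ≠ b →
      ∑ j, paddedRow GT G0 a j * paddedRow GT G0 b j = 0) ∧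
    (∀ a b c : Fin kT ⊕ Fin k0, a ≠ b → a ≠ c → b ≠ c →
      ∑ j, paddedRow GT G0 a j * paddedRow GT G0 b j * paddedRow GT G0 c j = 0) ∧
    (∀ a : Fin kT ⊕ Fin k0,
      Even ((Finset.univ.filter (fun j => paddedRow GT G0 a j = 1)).card)) ∧
    (∀ u ∈ Submodule.span (ZMod 2) (Set.range (paddedRow GT G0)),
     ∀ v ∈ Submodule.span (ZMod 2) (Set.range (paddedRow GT G0)),
     ∀ w ∈ Submodule.span (ZMod 2) (Set.range (paddedRow GT G0)),
      Even ((Finset.univ.filter (fun j => u j * v j * w j = 1)).card)) := by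
  have hrow := sum_paddedRow_eq_zero hodd heven
  have hpair' : ∀ a b, a ≠ b → ∑ j, paddedRow GT G0 a j * paddedRow GT G0 b j = 0 :=
    fun a b hab => by
      simpa using (sum_paddedRow_mul_paddedRow_mul (GT := GT) (G0 := G0) hab 1).trans
        (by simpa using hpair a b hab)
  have htriple' : ∀ a b c, a ≠ b → a ≠ c → b ≠ c →
      ∑ j, paddedRow GT G0 a j * paddedRow GT G0 b j * paddedRow GT G0 c j = 0 :=
    fun a b c hab hac hbc => by
      rw [sum_paddedRow_mul_paddedRow_mul hab]
      simpa only [paddedRow_inr] using htriple a b c hab hac hbc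
  refine ⟨hpair', htriple', fun a => (even_card_filter_eq_one_iff_sum_eq_zero _).2 (hrow a), ?_⟩
  intro u hu v hv w hw
  rw [even_card_filter_eq_one_iff_sum_eq_zero]
  exact sum_mul_mul_eq_zero_of_mem_span
    (sum_mul_mul_eq_zero_of_triorthogonal _ hrow hpair' htriple') hu hv hw
end

section
/- Let S ⊆ 𝔽₂^n be a self-orthogonal subspace (S ⊆ S^⊥) with basis b^(1),…,b^(dim S), and let ℓ^(1),…,ℓ^(k) ∈ S^⊥ be given. Suppose t ∈ {+1,−1}^n satisfies ∑_i v_i t_i ≡ 0 (mod 4) for every basis vector v of S and ∑_i ℓ^(a)_i t_i ≡ 0 (mod 4) for all a. Then ∑_i v_i t_i ≡ 0 (mod 4) for every v ∈ S, and for any ℓ ∈ S^⊥ and any s ∈ S, ∑_i ((ℓ+s) mod 2)_i t_i ≡ ∑_i ℓ_i t_i (mod 4). -/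
/-!
Over `𝔽₂` one has `(x + y)_i = x_i + y_i - 2 x_i y_i` as integers, so the signed weight
`w(x) = ∑ x_i t_i` satisfies `w(x + y) = w(x) + w(y) - 2 ∑ x_i y_i t_i`. Since every `t_i` is odd,
the correction sum is congruent mod 2 to `x · y`, so it is even whenever `x ⊥ y`, and then `w` is
additive mod 4. Induction over the span of the self-orthogonal generating set gives
`w(v) ≡ 0 (mod 4)` on all of `S`, and additivity for `ℓ ⊥ s` gives `w(ℓ + s) ≡ w(ℓ)`.
-/

open Finset

lemma ZMod.intCast_val_add_two (a b : ZMod 2) :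
    ((a + b).val : ℤ) = a.val + b.val - 2 * (a * b).val := by
  fin_cases a <;> fin_cases b <;> rfl

section SignedWeight

variable {ι : Type*} [Fintype ι]

def signedWeight (t : ι → ℤ) (x : ι → ZMod 2) : ℤ :=
  ∑ i, ((x i).val : ℤ) * t i

lemma signedWeight_add (t : ι → ℤ) (x y : ι → ZMod 2) :
    signedWeight t (x + y) = signedWeight t x + signedWeight t y - 2 * signedWeight t (x * y) := by
  simp only [signedWeight, mul_sum, ← sum_add_distrib, ← sum_sub_distrib]
  refine sum_congr rfl fun i _ => ?_
  rw [Pi.add_apply, Pi.mul_apply, ZMod.intCast_val_add_two]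
  ring

lemma intCast_signedWeight {t : ι → ℤ} (ht : ∀ i, Odd (t i)) (x : ι → ZMod 2) :
    (signedWeight t x : ZMod 2) = ∑ i, x i := by
  simp only [signedWeight, Int.cast_sum, Int.cast_mul, Int.cast_natCast, ZMod.natCast_zmod_val,
    (ZMod.intCast_eq_one_iff_odd).mpr (ht _), mul_one]

lemma signedWeight_add_modEq {t : ι → ℤ} (ht : ∀ i, Odd (t i)) {x y : ι → ZMod 2}
    (hxy : ∑ i, x i * y i = 0) :
    signedWeight t (x + y) ≡ signedWeight t x + signedWeight t y [ZMOD 4] := by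
  obtain ⟨c, hc⟩ : (2 : ℤ) ∣ signedWeight t (x * y) :=
    (ZMod.intCast_zmod_eq_zero_iff_dvd _ 2).mp (by simpa [intCast_signedWeight ht] using hxy)
  rw [signedWeight_add, hc, Int.modEq_iff_dvd]
  exact ⟨c, by ring⟩

lemma signedWeight_modEq_zero_of_mem_span {t : ι → ℤ} (ht : ∀ i, Odd (t i))
    {B : Set (ι → ZMod 2)}
    (hself : ∀ u ∈ Submodule.span (ZMod 2) B, ∀ v ∈ Submodule.span (ZMod 2) B,
      ∑ i, u i * v i = 0)
    (hB : ∀ v ∈ B, signedWeight t v ≡ 0 [ZMOD 4]) {v : ι → ZMod 2}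
    (hv : v ∈ Submodule.span (ZMod 2) B) : signedWeight t v ≡ 0 [ZMOD 4] := by
  induction hv using Submodule.span_induction with
  | mem x hx => exact hB x hx
  | zero => simp [signedWeight]
  | add x y hx hy ihx ihy =>
    simpa using (signedWeight_add_modEq ht (hself x hx y hy)).trans (ihx.add ihy)
  | smul c x _ ihx =>
    obtain rfl | rfl : c = 0 ∨ c = 1 := by revert c; decide
    · simp [signedWeight]
    · rwa [one_smul]

end SignedWeight

theorem sign_assignment_mod_four_general (n : ℕ)
    (S : Submodule (ZMod 2) (Fin n → ZMod 2))
    (hself : ∀ u ∈ S, ∀ v ∈ S, ∑ i, u i * v i = (0 : ZMod 2))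
    (B : Set (Fin n → ZMod 2)) (hB : Submodule.span (ZMod 2) B = S)
    (t : Fin n → ℤ) (ht : ∀ i, t i = 1 ∨ t i = -1)
    (hBt : ∀ v ∈ B, (∑ i, ((v i).val : ℤ) * t i) ≡ 0 [ZMOD 4]) :
    (∀ v ∈ S, (∑ i, ((v i).val : ℤ) * t i) ≡ 0 [ZMOD 4]) ∧
    (∀ l : Fin n → ZMod 2, (∀ s ∈ S, ∑ i, l i * s i = (0 : ZMod 2)) →
      ∀ s ∈ S,
        (∑ i, (((l + s) i).val : ℤ) * t i) ≡ (∑ i, ((l i).val : ℤ) * t i) [ZMOD 4]) := by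
  subst hB
  have hodd : ∀ i, Odd (t i) := fun i => by rcases ht i with h | h <;> simp [h]
  have hS : ∀ v ∈ Submodule.span (ZMod 2) B, signedWeight t v ≡ 0 [ZMOD 4] :=
    fun v hv => signedWeight_modEq_zero_of_mem_span hodd hself hBt hv
  refine ⟨hS, fun l hl s hs => ?_⟩
  have h := (signedWeight_add_modEq hodd (hl s hs)).trans ((hS s hs).add_left (signedWeight t l))
  rwa [add_zero] at h

/-- Given a self-orthogonal subspace `S ⊆ 𝔽₂^n` with spanning set `B`, vectors
`ℓ^(a) ∈ S^⊥`, and signs `t_i = ±1` with `∑ v_i t_i ≡ 0 (mod 4)` for every `v ∈ B` and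
every `ℓ^(a)`, we have `∑ v_i t_i ≡ 0 (mod 4)` for all `v ∈ S`, and for any `ℓ ∈ S^⊥`
and `s ∈ S`, `∑ ((ℓ+s) mod 2)_i t_i ≡ ∑ ℓ_i t_i (mod 4)`. -/
theorem sign_assignment_mod_four (n k : ℕ)
    (S : Submodule (ZMod 2) (Fin n → ZMod 2))
    (hself : ∀ u ∈ S, ∀ v ∈ S, ∑ i, u i * v i = (0 : ZMod 2))
    (B : Set (Fin n → ZMod 2)) (hB : Submodule.span (ZMod 2) B = S)
    (ℓ : Fin k → Fin n → ZMod 2)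
    (hℓperp : ∀ a, ∀ s ∈ S, ∑ i, ℓ a i * s i = (0 : ZMod 2))
    (t : Fin n → ℤ) (ht : ∀ i, t i = 1 ∨ t i = -1)
    (hBt : ∀ v ∈ B, (∑ i, ((v i).val : ℤ) * t i) ≡ 0 [ZMOD 4])
    (hℓt : ∀ a, (∑ i, ((ℓ a i).val : ℤ) * t i) ≡ 0 [ZMOD 4]) :
    (∀ v ∈ S, (∑ i, ((v i).val : ℤ) * t i) ≡ 0 [ZMOD 4]) ∧
    (∀ l : Fin n → ZMod 2, (∀ s ∈ S, ∑ i, l i * s i = (0 : ZMod 2)) →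
      ∀ s ∈ S,
        (∑ i, (((l + s) i).val : ℤ) * t i) ≡ (∑ i, ((l i).val : ℤ) * t i) [ZMOD 4]) :=
  sign_assignment_mod_four_general n S hself B hB t ht hBt
end
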